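/- arXiv:2407.00083 — 3 statements merged into one kernel-verified Lean document; each statement's English description precedes it below -/
import Mathlib

section
/- Let S be a finite singleton-rich semigroup and s, t ∈ S. Then s ≪ t (i.e. s = s⁺ t s*) if and only if s ∈ E(S)¹ t E(S)¹, i.e. s = etf for some e, f ∈ E(S) ∪ {1}. -/
/-
If `e` is an idempotent with `s = e u`, then `e` is a left identity of `s`, so it lies in the
subsemigroup generated by `φ⁺(s)`, whose kernel `s⁺` absorbs it: `s⁺ u = s⁺ e u = s⁺ s = s`.
Dually `u f = s` with `f` idempotent gives `u s* = s`. Applying both to `s = e t f` yields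
`s⁺ t s* = s`; conversely `s⁺` and `s*` are idempotents.
-/

open scoped Classical

/-- φ*(s): the idempotent right identities of `s`. -/
def rIds {S : Type*} [Mul S] (s : S) : Set S := {e | e * e = e ∧ s * e = s}

/-- φ⁺(s): the idempotent left identities of `s`. -/
def lIds {S : Type*} [Mul S] (s : S) : Set S := {e | e * e = e ∧ e * s = s}

/-- `x` is the (necessarily unique) element of a singleton kernel (minimal ideal) of the
subsemigroup `T`: `{x}` is an ideal of `T`, hence the minimal ideal of `T`. -/
def IsKer {S : Type*} [Semigroup S] (T : Subsemigroup S) (x : S) : Prop :=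
  x ∈ T ∧ ∀ a ∈ T, a * x = x ∧ x * a = x

/-- The natural partial order on idempotents: `e ≤ f` iff `ef = fe = e`. -/
def nle {S : Type*} [Mul S] (e f : S) : Prop := e * f = e ∧ f * e = e

/-- The relation `≪`: `s ≪ t` iff `s = s⁺ t s*`, where `sa s = s*` and `pl s = s⁺`. -/
def ll {S : Type*} [Mul S] (sa pl : S → S) (s t : S) : Prop := s = pl s * t * sa s

section

variable {S : Type*} [Semigroup S]

open Subsemigroup

lemma mul_eq_self_of_mem_closure_rIds {s x : S} (hx : x ∈ closure (rIds s)) : s * x = s := by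
  induction hx using closure_induction with
  | mem a ha => exact ha.2
  | mul a b _ _ ha hb => rw [← mul_assoc, ha, hb]

lemma mul_eq_self_of_mem_closure_lIds {s x : S} (hx : x ∈ closure (lIds s)) : x * s = s := by
  induction hx using closure_induction with
  | mem a ha => exact ha.2
  | mul a b _ _ ha hb => rw [mul_assoc, hb, ha]

namespace IsKer

variable {T : Subsemigroup S} {x : S}

lemma isIdempotentElem (h : IsKer T x) : IsIdempotentElem x := (h.2 x h.1).1

lemma mul_eq_of_mem_left (h : IsKer T x) {a : S} (ha : a ∈ T) : a * x = x := (h.2 a ha).1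

lemma mul_eq_of_mem_right (h : IsKer T x) {a : S} (ha : a ∈ T) : x * a = x := (h.2 a ha).2

lemma mul_eq_of_eq_idempotent_mul {s p e u : S} (hp : IsKer (closure (lIds s)) p)
    (he : IsIdempotentElem e) (hs : s = e * u) : p * u = s := by
  have he_mem : e ∈ lIds s := ⟨he, by rw [hs, ← mul_assoc, he.eq]⟩
  calc p * u = p * e * u := by rw [hp.mul_eq_of_mem_right (subset_closure he_mem)]
    _ = s := by rw [mul_assoc, ← hs, mul_eq_self_of_mem_closure_lIds hp.1]

lemma mul_eq_of_eq_mul_idempotent {s p f u : S} (hp : IsKer (closure (rIds s)) p)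
    (hf : IsIdempotentElem f) (hs : s = u * f) : u * p = s := by
  have hf_mem : f ∈ rIds s := ⟨hf, by rw [hs, mul_assoc, hf.eq]⟩
  calc u * p = u * (f * p) := by rw [hp.mul_eq_of_mem_left (subset_closure hf_mem)]
    _ = s := by rw [← mul_assoc, ← hs, mul_eq_self_of_mem_closure_rIds hp.1]

end IsKer

end

theorem stmt5_general {S : Type*} [Semigroup S] (sa pl : S → S)
    (hsa : ∀ s : S, IsKer (Subsemigroup.closure (rIds s)) (sa s))
    (hpl : ∀ s : S, IsKer (Subsemigroup.closure (lIds s)) (pl s))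
    (s t : S) :
    ll sa pl s t ↔
      (s = t ∨ (∃ e : S, e * e = e ∧ s = e * t) ∨ (∃ f : S, f * f = f ∧ s = t * f) ∨
        ∃ e f : S, e * e = e ∧ f * f = f ∧ s = e * t * f) := by
  have hpl_mul : pl s * s = s := mul_eq_self_of_mem_closure_lIds (hpl s).1
  have hmul_sa : s * sa s = s := mul_eq_self_of_mem_closure_rIds (hsa s).1
  constructor
  · intro h
    exact Or.inr <| Or.inr <| Or.inr
      ⟨pl s, sa s, (hpl s).isIdempotentElem, (hsa s).isIdempotentElem, h⟩
  · rintro (rfl | ⟨e, he, hs⟩ | ⟨f, hf, hs⟩ | ⟨e, f, he, hf, hs⟩) <;> unfold ll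
    · rw [hpl_mul, hmul_sa]
    · rw [(hpl s).mul_eq_of_eq_idempotent_mul he hs, hmul_sa]
    · rw [mul_assoc, (hsa s).mul_eq_of_eq_mul_idempotent hf hs, hpl_mul]
    · have hpl_t : pl s * (t * f) = s :=
        (hpl s).mul_eq_of_eq_idempotent_mul he (by rw [hs, mul_assoc])
      rw [(hsa s).mul_eq_of_eq_mul_idempotent hf (by rw [mul_assoc, hpl_t])]

/-- In a finite singleton-rich semigroup, `s ≪ t` iff `s ∈ E(S)¹ t E(S)¹`, i.e. `s = etf`
for some `e, f ∈ E(S) ∪ {1}`. -/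
theorem stmt5 {S : Type*} [Semigroup S] [Fintype S] (sa pl : S → S)
    (hsa : ∀ s : S, IsKer (Subsemigroup.closure (rIds s)) (sa s))
    (hpl : ∀ s : S, IsKer (Subsemigroup.closure (lIds s)) (pl s))
    (s t : S) :
    ll sa pl s t ↔
      (s = t ∨ (∃ e : S, e * e = e ∧ s = e * t) ∨ (∃ f : S, f * f = f ∧ s = t * f) ∨
        ∃ e f : S, e * e = e ∧ f * f = f ∧ s = e * t * f) :=
  stmt5_general sa pl hsa hpl s t
end

section
/- Let S be a finite singleton-rich semigroup. There do not exist pairwise distinct elements s₁, …, sₙ of S with n > 1 such that s₁ ≪ s₂ ≪ ⋯ ≪ sₙ ≪ s₁. Consequently, the relation ≪ is reflexive and antisymmetric. -/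
open scoped Classical

/-!
Suppose `x ≪ y`, i.e. `x = p y q` with `p = x⁺`, `q = x*`, and `y = u x v`. Then
`y = (u p) y (q v)`, and by finiteness some idempotent `g` with `q g = g` is a right identity
of `y`. Now `g q` is an idempotent right identity of `x`, so the kernel element `q = x*` absorbs
it: `g q = q`. Singleton-richness at the idempotent `q` gives `q⁺ = q`, which turns this into
`q g = q`, so `g = q` and `y q = y`. Dually `p y = y`, whence `x = p y q = y`.
A cycle `s₁ ≪ s₂ ≪ ⋯ ≪ sₙ ≪ s₁` puts `s₂` in `S¹ s₁ S¹`, so `s₁ = s₂`.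
-/

theorem exists_idempotent_of_finite {M : Type*} [Semigroup M] [Finite M] {s : Set M}
    (hs : s.Nonempty) (hmul : ∀ x ∈ s, ∀ y ∈ s, x * y ∈ s) : ∃ m ∈ s, m * m = m := by
  let : TopologicalSpace M := ⊥
  have : DiscreteTopology M := ⟨rfl⟩
  exact exists_idempotent_in_compact_subsemigroup (fun _ ↦ continuous_of_discreteTopology) s hs
    s.toFinite.isCompact hmul

section Sandwich

variable {S : Type*} [Semigroup S]

/-- The right factors `d` of sandwiches `y = c * y * d` with `q * d = d` form a subsemigroup,
which by finiteness contains an idempotent. -/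
theorem exists_idempotent_right_identity [Finite S] {y c d q : S} (hy : y = c * y * d)
    (hqd : q * d = d) : ∃ g, g * g = g ∧ y * g = y ∧ q * g = g := by
  obtain ⟨g, ⟨hqg, c', hc'⟩, hgg⟩ := exists_idempotent_of_finite
    (s := {d | q * d = d ∧ ∃ c, c * y * d = y}) ⟨d, hqd, c, hy.symm⟩ <| by
      rintro d ⟨hqd, c, hc⟩ d' ⟨hqd', c', hc'⟩
      refine ⟨by rw [← mul_assoc, hqd], c' * c, ?_⟩
      calc c' * c * y * (d * d') = c' * (c * y * d) * d' := by simp only [mul_assoc]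
        _ = y := by rw [hc, hc']
  refine ⟨g, hgg, ?_, hqg⟩
  calc y * g = c' * y * g * g := by rw [hc']
    _ = y := by rw [mul_assoc _ g, hgg, hc']

theorem mul_eq_self_of_sandwich_right [Finite S] {x y c d p q : S} (hq : q * q = q)
    (hx : x = p * y * q) (hy : y = c * y * d) (hqd : q * d = d)
    (habs : ∀ f ∈ rIds x, f * q = q) (hidem : ∀ g ∈ lIds q, q * g = q) : y * q = y := by
  obtain ⟨g, hgg, hyg, hqg⟩ := exists_idempotent_right_identity hy hqd
  have hgq : g * q ∈ rIds x := by
    refine ⟨by rw [mul_assoc, ← mul_assoc q, hqg, ← mul_assoc, hgg], ?_⟩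
    calc x * (g * q) = p * (y * (q * g)) * q := by rw [hx]; simp only [mul_assoc]
      _ = x := by rw [hqg, hyg, hx]
  have hg : g = q := by
    have h := habs _ hgq
    rw [mul_assoc, hq] at h
    rw [← hqg, hidem g ⟨hgg, h⟩]
  rw [← hg, hyg]

open MulOpposite in
theorem mem_rIds_op {x : S} {f : Sᵐᵒᵖ} : f ∈ rIds (op x) ↔ f.unop ∈ lIds x := by
  simp only [rIds, lIds, Set.mem_ofPred_eq, ← unop_injective.eq_iff, unop_mul, unop_op]

open MulOpposite in
theorem mem_lIds_op {x : S} {f : Sᵐᵒᵖ} : f ∈ lIds (op x) ↔ f.unop ∈ rIds x := by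
  simp only [rIds, lIds, Set.mem_ofPred_eq, ← unop_injective.eq_iff, unop_mul, unop_op]

open MulOpposite in
theorem mul_eq_self_of_sandwich_left [Finite S] {x y c d p q : S} (hp : p * p = p)
    (hx : x = p * y * q) (hy : y = c * y * d) (hcp : c * p = c)
    (habs : ∀ f ∈ lIds x, p * f = p) (hidem : ∀ g ∈ rIds p, g * p = p) : p * y = y := by
  have : Finite Sᵐᵒᵖ := .of_equiv S opEquiv
  refine op_injective <| mul_eq_self_of_sandwich_right (x := op x) (y := op y) (c := op d)
    (d := op c) (p := op q) (q := op p) ?_ ?_ ?_ ?_ ?_ ?_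
  · rw [← op_mul, hp]
  · rw [hx]; simp only [op_mul, mul_assoc]
  · nth_rw 1 [hy]; simp only [op_mul, mul_assoc]
  · rw [← op_mul, hcp]
  · exact fun f hf ↦ unop_injective (habs _ (mem_rIds_op.1 hf))
  · exact fun g hg ↦ unop_injective (hidem _ (mem_lIds_op.1 hg))

end Sandwich

section SingletonRich

variable {S : Type*} [Semigroup S] {sa pl : S → S}

theorem mul_eq_self_of_mem_closure_rIds_s6 {s a : S} (ha : a ∈ Subsemigroup.closure (rIds s)) :
    s * a = s := by
  induction ha using Subsemigroup.closure_induction with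
  | mem f hf => exact hf.2
  | mul f g _ _ hf hg => rw [← mul_assoc, hf, hg]

theorem mul_eq_self_of_mem_closure_lIds_s6 {s a : S} (ha : a ∈ Subsemigroup.closure (lIds s)) :
    a * s = s := by
  induction ha using Subsemigroup.closure_induction with
  | mem f hf => exact hf.2
  | mul f g _ _ hf hg => rw [mul_assoc, hg, hf]

theorem exists_eq_mul_mul_of_ll_chain {g : ℕ → S} (hg : ∀ m, ll sa pl (g m) (g (m + 1)))
    (m k : ℕ) : ∃ u v, g m = u * g (m + k + 1) * v := by
  induction k generalizing m with
  | zero => exact ⟨pl (g m), sa (g m), hg m⟩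
  | succ k ih =>
    obtain ⟨u, v, h⟩ := ih (m + 1)
    refine ⟨pl (g m) * u, v * sa (g m), ?_⟩
    calc g m = pl (g m) * (u * g (m + 1 + k + 1) * v) * sa (g m) := by rw [← h]; exact hg m
      _ = pl (g m) * u * g (m + (k + 1) + 1) * (v * sa (g m)) := by
        rw [show m + 1 + k + 1 = m + (k + 1) + 1 by omega]; simp only [mul_assoc]

variable (hsa : ∀ s : S, IsKer (Subsemigroup.closure (rIds s)) (sa s))
variable (hpl : ∀ s : S, IsKer (Subsemigroup.closure (lIds s)) (pl s))
include hsa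

theorem mul_sa (s : S) : s * sa s = s := mul_eq_self_of_mem_closure_rIds_s6 (hsa s).1

theorem sa_mul_self (s : S) : sa s * sa s = sa s := ((hsa s).2 _ (hsa s).1).1

theorem mul_sa_eq_sa_of_mem_rIds {s f : S} (hf : f ∈ rIds s) : f * sa s = sa s :=
  ((hsa s).2 f (Subsemigroup.subset_closure hf)).1

theorem sa_eq_self_of_mul_self {e : S} (he : e * e = e) : sa e = e :=
  (mul_sa_eq_sa_of_mem_rIds hsa ⟨he, he⟩).symm.trans (mul_sa hsa e)

theorem mul_eq_self_of_mem_rIds {e g : S} (he : e * e = e) (hg : g ∈ rIds e) : g * e = e := by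
  simpa only [sa_eq_self_of_mul_self hsa he] using mul_sa_eq_sa_of_mem_rIds hsa hg

omit hsa
include hpl

theorem pl_mul (s : S) : pl s * s = s := mul_eq_self_of_mem_closure_lIds_s6 (hpl s).1

theorem pl_mul_self (s : S) : pl s * pl s = pl s := ((hpl s).2 _ (hpl s).1).1

theorem pl_mul_eq_pl_of_mem_lIds {s f : S} (hf : f ∈ lIds s) : pl s * f = pl s :=
  ((hpl s).2 f (Subsemigroup.subset_closure hf)).2

theorem pl_eq_self_of_mul_self {e : S} (he : e * e = e) : pl e = e :=
  (pl_mul_eq_pl_of_mem_lIds hpl ⟨he, he⟩).symm.trans (pl_mul hpl e)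

theorem mul_eq_self_of_mem_lIds {e g : S} (he : e * e = e) (hg : g ∈ lIds e) : e * g = e := by
  simpa only [pl_eq_self_of_mul_self hpl he] using pl_mul_eq_pl_of_mem_lIds hpl hg

include hsa

theorem ll_refl (s : S) : ll sa pl s s := by
  rw [ll, pl_mul hpl, mul_sa hsa]

theorem eq_of_ll_of_eq_mul_mul [Finite S] {x y u v : S} (hxy : ll sa pl x y)
    (hyx : y = u * x * v) : x = y := by
  have hy : y = u * pl x * y * (sa x * v) := by
    calc y = u * (pl x * y * sa x) * v := by rw [← hxy, hyx]
      _ = u * pl x * y * (sa x * v) := by simp only [mul_assoc]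
  have hyq : y * sa x = y := mul_eq_self_of_sandwich_right (sa_mul_self hsa x) hxy hy
    (by rw [← mul_assoc, sa_mul_self hsa]) (fun _ ↦ mul_sa_eq_sa_of_mem_rIds hsa)
    (fun _ ↦ mul_eq_self_of_mem_lIds hpl (sa_mul_self hsa x))
  have hpy : pl x * y = y := mul_eq_self_of_sandwich_left (pl_mul_self hpl x) hxy hy
    (by rw [mul_assoc, pl_mul_self hpl]) (fun _ ↦ pl_mul_eq_pl_of_mem_lIds hpl)
    (fun _ ↦ mul_eq_self_of_mem_rIds hsa (pl_mul_self hpl x))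
  calc x = pl x * y * sa x := hxy
    _ = y := by rw [hpy, hyq]

theorem apply_zero_eq_apply_one_of_ll_chain [Finite S] {g : ℕ → S}
    (hg : ∀ m, ll sa pl (g m) (g (m + 1))) {n : ℕ} (hn : 1 < n) (hgn : g n = g 0) :
    g 0 = g 1 := by
  obtain ⟨u, v, h⟩ := exists_eq_mul_mul_of_ll_chain hg 1 (n - 2)
  rw [show 1 + (n - 2) + 1 = n by omega, hgn] at h
  exact eq_of_ll_of_eq_mul_mul hsa hpl (hg 0) h

end SingletonRich

/-- In a finite singleton-rich semigroup there is no cycle `s₁ ≪ s₂ ≪ ⋯ ≪ sₙ ≪ s₁` of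
pairwise distinct elements with `n > 1`; consequently `≪` is reflexive and antisymmetric. -/
theorem stmt6 {S : Type*} [Semigroup S] [Fintype S] (sa pl : S → S)
    (hsa : ∀ s : S, IsKer (Subsemigroup.closure (rIds s)) (sa s))
    (hpl : ∀ s : S, IsKer (Subsemigroup.closure (lIds s)) (pl s)) :
    (∀ n : ℕ, ∀ hn : 1 < n, ∀ f : Fin n → S, Function.Injective f →
        ¬ (∀ i : Fin n, ll sa pl (f i) (f ⟨(i.val + 1) % n, Nat.mod_lt _ (by omega)⟩))) ∧
      (∀ s : S, ll sa pl s s) ∧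
      (∀ s t : S, ll sa pl s t → ll sa pl t s → s = t) := by
  refine ⟨fun n hn f hf hcycle ↦ ?_, ll_refl hsa hpl,
    fun s t hst hts ↦ eq_of_ll_of_eq_mul_mul hsa hpl hst hts⟩
  let g : ℕ → S := fun m ↦ f ⟨m % n, Nat.mod_lt _ (by omega)⟩
  have hg : ∀ m, ll sa pl (g m) (g (m + 1)) := fun m ↦ by
    have hmod : (m % n + 1) % n = (m + 1) % n := by rw [Nat.add_mod, Nat.mod_mod, ← Nat.add_mod]
    simpa only [hmod] using hcycle ⟨m % n, Nat.mod_lt _ (by omega)⟩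
  have h01 := hf (apply_zero_eq_apply_one_of_ll_chain hsa hpl hg hn (by simp [g]))
  simp [Fin.ext_iff, Nat.mod_eq_of_lt hn] at h01
end

section
/- Let S be a finite singleton-rich semigroup, s, t ∈ S, and m an integer such that sᵢ* tᵢ⁺ = tᵢ⁺ sᵢ* for all i < m, where s₀ = s, t₀ = t, and s_{i+1} = sᵢ tᵢ⁺, t_{i+1} = sᵢ* tᵢ whenever sᵢ* tᵢ⁺ = tᵢ⁺ sᵢ* (and s_{i+1} = sᵢ, t_{i+1} = tᵢ otherwise). Then for all i < m: (1) s_{i+1}* ≤ sᵢ* and s_{i+1}* ≤ tᵢ⁺, and t_{i+1}⁺ ≤ sᵢ* and t_{i+1}⁺ ≤ tᵢ⁺; (2) s_{i+1} = s tᵢ⁺ and t_{i+1} = sᵢ* t. -/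
open scoped Classical

/-!
Write `fᵢ = sᵢ*` and `gᵢ = tᵢ⁺`. When `fᵢ` and `gᵢ` commute, both are idempotent right identities
of `s_{i+1} = sᵢ gᵢ` and idempotent left identities of `t_{i+1} = fᵢ tᵢ`; since `s_{i+1}*` and
`t_{i+1}⁺` are kernels of the subsemigroups these generate, they lie below `fᵢ` and `gᵢ`. In
particular the `gᵢ` form a descending chain, so `s_{i+1} = s g₀ ⋯ gᵢ = s gᵢ`, and dually
`t_{i+1} = fᵢ t`.
-/

section Semigroup

variable {S : Type*} [Semigroup S]

theorem IsKer.nle_of_mem {T : Subsemigroup S} {x e : S} (hx : IsKer T x) (he : e ∈ T) :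
    nle x e :=
  ⟨(hx.2 e he).2, (hx.2 e he).1⟩

theorem IsKer.mul_self {T : Subsemigroup S} {x : S} (hx : IsKer T x) : x * x = x :=
  (hx.2 x hx.1).1

theorem IsKer.mul_eq_of_closure_rIds {u x : S} (hx : IsKer (Subsemigroup.closure (rIds u)) x) :
    u * x = u :=
  Subsemigroup.closure_induction (p := fun y _ => u * y = u) (fun _ he => he.2)
    (fun _ _ _ _ hy hz => by rw [← mul_assoc, hy, hz]) hx.1

theorem IsKer.mul_eq_of_closure_lIds {u x : S} (hx : IsKer (Subsemigroup.closure (lIds u)) x) :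
    x * u = u :=
  Subsemigroup.closure_induction (p := fun y _ => y * u = u) (fun _ he => he.2)
    (fun _ _ _ _ hy hz => by rw [mul_assoc, hz, hy]) hx.1

theorem mem_rIds_mul_self (u : S) {f : S} (hf : f * f = f) : f ∈ rIds (u * f) :=
  ⟨hf, by rw [mul_assoc, hf]⟩

theorem mem_lIds_self_mul (v : S) {e : S} (he : e * e = e) : e ∈ lIds (e * v) :=
  ⟨he, by rw [← mul_assoc, he]⟩

theorem mem_rIds_mul_of_commute {u e f : S} (he : e ∈ rIds u) (hef : Commute e f) :
    e ∈ rIds (u * f) :=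
  ⟨he.1, by rw [mul_assoc, ← hef.eq, ← mul_assoc, he.2]⟩

theorem mem_lIds_mul_of_commute {v e f : S} (hf : f ∈ lIds v) (hef : Commute e f) :
    f ∈ lIds (e * v) :=
  ⟨hf.1, by rw [← mul_assoc, ← hef.eq, mul_assoc, hf.2]⟩

theorem nle_of_commute_of_isKer {sa pl : S → S}
    (hsa : ∀ s : S, IsKer (Subsemigroup.closure (rIds s)) (sa s))
    (hpl : ∀ s : S, IsKer (Subsemigroup.closure (lIds s)) (pl s)) {u v : S}
    (hc : Commute (sa u) (pl v)) :
    nle (sa (u * pl v)) (sa u) ∧ nle (sa (u * pl v)) (pl v) ∧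
      nle (pl (sa u * v)) (sa u) ∧ nle (pl (sa u * v)) (pl v) := by
  have hf : sa u ∈ rIds u := ⟨(hsa u).mul_self, (hsa u).mul_eq_of_closure_rIds⟩
  have hg : pl v ∈ lIds v := ⟨(hpl v).mul_self, (hpl v).mul_eq_of_closure_lIds⟩
  exact ⟨(hsa _).nle_of_mem (Subsemigroup.subset_closure (mem_rIds_mul_of_commute hf hc)),
    (hsa _).nle_of_mem (Subsemigroup.subset_closure (mem_rIds_mul_self u (hpl v).mul_self)),
    (hpl _).nle_of_mem (Subsemigroup.subset_closure (mem_lIds_self_mul v (hsa u).mul_self)),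
    (hpl _).nle_of_mem (Subsemigroup.subset_closure (mem_lIds_mul_of_commute hg hc))⟩

theorem mul_right_eq_of_antitone {x g : ℕ → S} {m : ℕ} (hx : ∀ i < m, x (i + 1) = x i * g i)
    (hg : ∀ i, i + 1 < m → g i * g (i + 1) = g (i + 1)) :
    ∀ i < m, x (i + 1) = x 0 * g i := by
  intro i hi
  induction i with
  | zero => exact hx 0 hi
  | succ i ih => rw [hx _ hi, ih (by omega), mul_assoc, hg i hi]

theorem mul_left_eq_of_antitone {y f : ℕ → S} {m : ℕ} (hy : ∀ i < m, y (i + 1) = f i * y i)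
    (hf : ∀ i, i + 1 < m → f (i + 1) * f i = f (i + 1)) :
    ∀ i < m, y (i + 1) = f i * y 0 := by
  intro i hi
  induction i with
  | zero => exact hy 0 hi
  | succ i ih => rw [hy _ hi, ih (by omega), ← mul_assoc, hf i hi]

end Semigroup

theorem stmt8_general {S : Type*} [Semigroup S] (sa pl : S → S)
    (hsa : ∀ s : S, IsKer (Subsemigroup.closure (rIds s)) (sa s))
    (hpl : ∀ s : S, IsKer (Subsemigroup.closure (lIds s)) (pl s))
    (s t : S) (sq tq : ℕ → S) (hs0 : sq 0 = s) (ht0 : tq 0 = t)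
    (hrec : ∀ i : ℕ,
      (sa (sq i) * pl (tq i) = pl (tq i) * sa (sq i) →
        sq (i + 1) = sq i * pl (tq i) ∧ tq (i + 1) = sa (sq i) * tq i) ∧
      (sa (sq i) * pl (tq i) ≠ pl (tq i) * sa (sq i) →
        sq (i + 1) = sq i ∧ tq (i + 1) = tq i))
    (m : ℕ) (hm : ∀ i < m, sa (sq i) * pl (tq i) = pl (tq i) * sa (sq i)) :
    ∀ i < m,
      (nle (sa (sq (i + 1))) (sa (sq i)) ∧ nle (sa (sq (i + 1))) (pl (tq i)) ∧
        nle (pl (tq (i + 1))) (sa (sq i)) ∧ nle (pl (tq (i + 1))) (pl (tq i))) ∧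
      sq (i + 1) = s * pl (tq i) ∧ tq (i + 1) = sa (sq i) * t := by
  have hstep (i : ℕ) (hi : i < m) :
      sq (i + 1) = sq i * pl (tq i) ∧ tq (i + 1) = sa (sq i) * tq i :=
    (hrec i).1 (hm i hi)
  have hle (i : ℕ) (hi : i < m) :
      nle (sa (sq (i + 1))) (sa (sq i)) ∧ nle (sa (sq (i + 1))) (pl (tq i)) ∧
        nle (pl (tq (i + 1))) (sa (sq i)) ∧ nle (pl (tq (i + 1))) (pl (tq i)) := by
    rw [(hstep i hi).1, (hstep i hi).2]
    exact nle_of_commute_of_isKer hsa hpl (hm i hi)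
  have hs := mul_right_eq_of_antitone (fun i hi => (hstep i hi).1)
    (fun i hi => (hle i (by omega)).2.2.2.2)
  have ht := mul_left_eq_of_antitone (fun i hi => (hstep i hi).2)
    (fun i hi => (hle i (by omega)).1.1)
  intro i hi
  exact ⟨hle i hi, hs0 ▸ hs i hi, ht0 ▸ ht i hi⟩

/-- Lemma on the ε-sequences: if `sᵢ* tᵢ⁺ = tᵢ⁺ sᵢ*` for all `i < m`, then for all `i < m`:
`s_{i+1}* ≤ sᵢ*, tᵢ⁺` and `t_{i+1}⁺ ≤ sᵢ*, tᵢ⁺`, and `s_{i+1} = s tᵢ⁺`, `t_{i+1} = sᵢ* t`. -/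
theorem stmt8 {S : Type*} [Semigroup S] [Fintype S] (sa pl : S → S)
    (hsa : ∀ s : S, IsKer (Subsemigroup.closure (rIds s)) (sa s))
    (hpl : ∀ s : S, IsKer (Subsemigroup.closure (lIds s)) (pl s))
    (s t : S) (sq tq : ℕ → S) (hs0 : sq 0 = s) (ht0 : tq 0 = t)
    (hrec : ∀ i : ℕ,
      (sa (sq i) * pl (tq i) = pl (tq i) * sa (sq i) →
        sq (i + 1) = sq i * pl (tq i) ∧ tq (i + 1) = sa (sq i) * tq i) ∧
      (sa (sq i) * pl (tq i) ≠ pl (tq i) * sa (sq i) →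
        sq (i + 1) = sq i ∧ tq (i + 1) = tq i))
    (m : ℕ) (hm : ∀ i < m, sa (sq i) * pl (tq i) = pl (tq i) * sa (sq i)) :
    ∀ i < m,
      (nle (sa (sq (i + 1))) (sa (sq i)) ∧ nle (sa (sq (i + 1))) (pl (tq i)) ∧
        nle (pl (tq (i + 1))) (sa (sq i)) ∧ nle (pl (tq (i + 1))) (pl (tq i))) ∧
      sq (i + 1) = s * pl (tq i) ∧ tq (i + 1) = sa (sq i) * t :=
  stmt8_general sa pl hsa hpl s t sq tq hs0 ht0 hrec m hm
end
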